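/- arXiv:2306.04756 — 3 statements merged into one kernel-verified Lean document; each statement's English description precedes it below -/
import Mathlib

section
/- Let f : ℝ^n → ℝ be twice continuously differentiable such that all eigenvalues of ∇²f(x) lie in [-ε, ρ] for all x, with ε, ρ ≥ 0. Then for any u, v ∈ ℝ^n and any η > 0: ⟨∇f(u) - ∇f(v), u - v⟩ ≥ 2η(1 - ηρ/2)‖∇f(u) - ∇f(v)‖² - ε‖u - v - η(∇f(u) - ∇f(v))‖². -/
/-!
Bounds `-ε ≤ ∇²f ≤ ρ` give, along segments, the quadratic upper bound
`f z ≤ f x + ⟪∇f x, z - x⟫ + ρ/2 ‖z - x‖²` and the matching lower bound with `-ε`.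
Evaluate both models at `u - η (∇f u - ∇f v)` (upper from `u`, lower from `v`) and at
`v + η (∇f u - ∇f v)` (upper from `v`, lower from `u`); adding the two resulting inequalities,
the values of `f` cancel.
-/

open RealInnerProductSpace

theorem image_one_le_of_deriv2_le {φ φ' φ'' : ℝ → ℝ} {c : ℝ}
    (hφ : ∀ t, HasDerivAt φ (φ' t) t) (hφ' : ∀ t, HasDerivAt φ' (φ'' t) t)
    (hφ'' : ∀ t, φ'' t ≤ c) :
    φ 1 ≤ φ 0 + φ' 0 + c / 2 := by
  -- `c t² / 2 - φ t` is convex, so it lies above its tangent line at `0`.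
  have hψ : ∀ t, HasDerivAt (fun t => c / 2 * t ^ 2 - φ t) (c * t - φ' t) t := fun t => by
    refine (((hasDerivAt_pow 2 t).const_mul (c / 2)).fun_sub (hφ t)).congr_deriv ?_
    norm_num
    ring
  have hψ' : ∀ t, HasDerivAt (fun t => c * t - φ' t) (c - φ'' t) t := fun t => by
    simpa using ((hasDerivAt_id t).const_mul c).fun_sub (hφ' t)
  have hconv : ConvexOn ℝ Set.univ (fun t => c / 2 * t ^ 2 - φ t) :=
    convexOn_of_hasDerivWithinAt2_nonneg convex_univ
      (fun t _ => (hψ t).continuousAt.continuousWithinAt)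
      (fun t _ => (hψ t).hasDerivWithinAt) (fun t _ => (hψ' t).hasDerivWithinAt)
      (fun t _ => sub_nonneg.2 (hφ'' t))
  have := hconv.le_slope_of_hasDerivAt (Set.mem_univ 0) (Set.mem_univ 1) zero_lt_one (hψ 0)
  rw [slope_def_field] at this
  norm_num at this
  linarith

theorem le_image_one_of_le_deriv2 {φ φ' φ'' : ℝ → ℝ} {c : ℝ}
    (hφ : ∀ t, HasDerivAt φ (φ' t) t) (hφ' : ∀ t, HasDerivAt φ' (φ'' t) t)
    (hφ'' : ∀ t, c ≤ φ'' t) :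
    φ 0 + φ' 0 + c / 2 ≤ φ 1 := by
  have := image_one_le_of_deriv2_le (φ := -φ) (φ' := -φ') (φ'' := -φ'') (c := -c)
    (fun t => (hφ t).neg) (fun t => (hφ' t).neg) (fun t => neg_le_neg (hφ'' t))
  simp only [Pi.neg_apply] at this
  linarith

section InnerProductSpace

variable {E : Type*} [NormedAddCommGroup E] [InnerProductSpace ℝ E]

theorem hasDerivAt_add_smul (x d : E) (t : ℝ) : HasDerivAt (fun t : ℝ => x + t • d) d t := by
  simpa using ((hasDerivAt_id t).smul_const d).const_add x

theorem hasDerivAt_inner_comp_add_smul {g : E → E} {H : E → E →L[ℝ] E}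
    (hg : ∀ x, HasFDerivAt g (H x) x) (x d : E) (t : ℝ) :
    HasDerivAt (fun t : ℝ => ⟪g (x + t • d), d⟫) ⟪H (x + t • d) d, d⟫ t := by
  simpa using
    ((hg _).comp_hasDerivAt t (hasDerivAt_add_smul x d t)).inner ℝ (hasDerivAt_const t d)

variable [CompleteSpace E] {f : E → ℝ} {g : E → E} {H : E → E →L[ℝ] E}

theorem hasDerivAt_comp_add_smul (hf : ∀ x, HasGradientAt f (g x) x) (x d : E) (t : ℝ) :
    HasDerivAt (fun t : ℝ => f (x + t • d)) ⟪g (x + t • d), d⟫ t := by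
  simpa [Function.comp_def] using
    (hf _).hasFDerivAt.comp_hasDerivAt t (hasDerivAt_add_smul x d t)

theorem le_add_inner_add_sq_of_hessian_le (hf : ∀ x, HasGradientAt f (g x) x)
    (hg : ∀ x, HasFDerivAt g (H x) x) {c : ℝ} (hc : ∀ x w, ⟪H x w, w⟫ ≤ c * ‖w‖ ^ 2) (x y : E) :
    f y ≤ f x + ⟪g x, y - x⟫ + c / 2 * ‖y - x‖ ^ 2 := by
  have := image_one_le_of_deriv2_le (hasDerivAt_comp_add_smul hf x (y - x))
    (hasDerivAt_inner_comp_add_smul hg x (y - x)) (fun t => hc _ _)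
  simp only [one_smul, zero_smul, add_zero, add_sub_cancel] at this
  linarith

theorem add_inner_sub_sq_le_of_le_hessian (hf : ∀ x, HasGradientAt f (g x) x)
    (hg : ∀ x, HasFDerivAt g (H x) x) {c : ℝ} (hc : ∀ x w, -c * ‖w‖ ^ 2 ≤ ⟪H x w, w⟫) (x y : E) :
    f x + ⟪g x, y - x⟫ - c / 2 * ‖y - x‖ ^ 2 ≤ f y := by
  have := le_image_one_of_le_deriv2 (hasDerivAt_comp_add_smul hf x (y - x))
    (hasDerivAt_inner_comp_add_smul hg x (y - x)) (fun t => hc _ _)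
  simp only [one_smul, zero_smul, add_zero, add_sub_cancel] at this
  linarith

variable {ε ρ : ℝ} (hf : ∀ x, HasGradientAt f (g x) x) (hg : ∀ x, HasFDerivAt g (H x) x)
  (hlo : ∀ x w, -ε * ‖w‖ ^ 2 ≤ ⟪H x w, w⟫) (hup : ∀ x w, ⟪H x w, w⟫ ≤ ρ * ‖w‖ ^ 2)
include hf hg hlo hup

theorem add_inner_sub_sq_le_add_inner_add_sq (x y z : E) :
    f y + ⟪g y, z - y⟫ - ε / 2 * ‖z - y‖ ^ 2 ≤ f x + ⟪g x, z - x⟫ + ρ / 2 * ‖z - x‖ ^ 2 :=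
  (add_inner_sub_sq_le_of_le_hessian hf hg hlo y z).trans
    (le_add_inner_add_sq_of_hessian_le hf hg hup x z)

theorem almost_cocoercivity (u v : E) (η : ℝ) :
    2 * η * (1 - η * ρ / 2) * ‖g u - g v‖ ^ 2 - ε * ‖u - v - η • (g u - g v)‖ ^ 2
      ≤ ⟪g u - g v, u - v⟫ := by
  set G := g u - g v
  have hp := add_inner_sub_sq_le_add_inner_add_sq hf hg hlo hup u v (u - η • G)
  have hq := add_inner_sub_sq_le_add_inner_add_sq hf hg hlo hup v u (v + η • G)
  rw [show u - η • G - v = u - v - η • G by abel, show u - η • G - u = -(η • G) by abel] at hp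
  rw [show v + η • G - u = -(u - v - η • G) by abel, show v + η • G - v = η • G by abel] at hq
  simp only [norm_neg, norm_smul, mul_pow, Real.norm_eq_abs, sq_abs, inner_neg_right,
    inner_sub_right, inner_smul_right] at hp hq
  have hG : ⟪g u, G⟫ - ⟪g v, G⟫ = ‖G‖ ^ 2 := by
    rw [← inner_sub_left, real_inner_self_eq_norm_sq]
  rw [inner_sub_left, inner_sub_right, inner_sub_right]
  linear_combination hp + hq - 2 * η * hG

end InnerProductSpace

theorem stmt2_general {n : ℕ} (f : EuclideanSpace ℝ (Fin n) → ℝ) (hf : ContDiff ℝ 2 f)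
    (ε ρ : ℝ)
    (H : EuclideanSpace ℝ (Fin n) → EuclideanSpace ℝ (Fin n) →L[ℝ] EuclideanSpace ℝ (Fin n))
    (hH : ∀ x, HasFDerivAt (gradient f) (H x) x)
    (hHbound : ∀ x w, -ε * ‖w‖ ^ 2 ≤ (inner ℝ (H x w) w : ℝ) ∧
      (inner ℝ (H x w) w : ℝ) ≤ ρ * ‖w‖ ^ 2)
    (u v : EuclideanSpace ℝ (Fin n)) (η : ℝ) :
    2 * η * (1 - η * ρ / 2) * ‖gradient f u - gradient f v‖ ^ 2
        - ε * ‖u - v - η • (gradient f u - gradient f v)‖ ^ 2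
      ≤ (inner ℝ (gradient f u - gradient f v) (u - v) : ℝ) :=
  almost_cocoercivity (fun x => (hf.differentiable two_ne_zero x).hasGradientAt) hH
    (fun x w => (hHbound x w).1) (fun x w => (hHbound x w).2) u v η

/-- Almost co-coercivity of the gradient operator of a function whose Hessian eigenvalues
lie in `[-ε, ρ]` everywhere. -/
theorem stmt2 {n : ℕ} (f : EuclideanSpace ℝ (Fin n) → ℝ) (hf : ContDiff ℝ 2 f)
    (ε ρ : ℝ) (hε : 0 ≤ ε) (hρ : 0 ≤ ρ)
    (H : EuclideanSpace ℝ (Fin n) → EuclideanSpace ℝ (Fin n) →L[ℝ] EuclideanSpace ℝ (Fin n))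
    (hH : ∀ x, HasFDerivAt (gradient f) (H x) x)
    (hHbound : ∀ x w, -ε * ‖w‖ ^ 2 ≤ (inner ℝ (H x w) w : ℝ) ∧
      (inner ℝ (H x w) w : ℝ) ≤ ρ * ‖w‖ ^ 2)
    (u v : EuclideanSpace ℝ (Fin n)) (η : ℝ) (hη : 0 < η) :
    2 * η * (1 - η * ρ / 2) * ‖gradient f u - gradient f v‖ ^ 2
        - ε * ‖u - v - η • (gradient f u - gradient f v)‖ ^ 2
      ≤ (inner ℝ (gradient f u - gradient f v) (u - v) : ℝ) :=
  stmt2_general f hf ε ρ H hH hHbound u v η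
end

section
/- Let f : ℝ^n → ℝ be twice continuously differentiable with all Hessian eigenvalues in [-ε, ρ], ε, ρ ≥ 0. Suppose 0 < η < min(1/(2ε), 3/(2ρ)) (with 1/(2ε) interpreted as +∞ if ε = 0). Fix u, v ∈ ℝ^n and set ζ = u - v - η(∇f(u) - ∇f(v)). Then ‖ζ‖² ≤ (1/(1 - 2ηε))‖u - v‖². -/
/-! The map `g x = x - η ∇f(x)` has derivative `1 - η H(x)`, a symmetric operator whose
quadratic form lies between `(1 - ηρ)‖w‖²` and `(1 + ηε)‖w‖²`; since `ηρ < 3/2`, its operator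
norm is at most `1 + ηε`. By the mean value inequality `‖ζ‖ = ‖g u - g v‖ ≤ (1 + ηε)‖u - v‖`,
and `(1 + x)² (1 - 2x) = 1 - x²(3 + 2x) ≤ 1` for `x = ηε ≥ 0`. -/

open InnerProductSpace

variable {E : Type*} [NormedAddCommGroup E] [InnerProductSpace ℝ E]

theorem ContinuousLinearMap.opNorm_le_of_abs_inner_self_le {T : E →L[ℝ] E}
    (hT : (T : E →ₗ[ℝ] E).IsSymmetric) {C : ℝ} (hC : 0 ≤ C)
    (h : ∀ x, |inner ℝ (T x) x| ≤ C * ‖x‖ ^ 2) : ‖T‖ ≤ C := by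
  rw [T.norm_eq_iSup_rayleighQuotient hT]
  refine ciSup_le fun x => ?_
  rcases eq_or_ne x 0 with rfl | hx
  · simpa using hC
  rw [rayleighQuotient, reApplyInnerSelf_apply, RCLike.re_to_real, abs_div, abs_sq,
    div_le_iff₀ (by positivity)]
  exact h x

theorem norm_id_sub_smul_le_of_inner_self_mem_Icc {T : E →L[ℝ] E}
    (hT : (T : E →ₗ[ℝ] E).IsSymmetric) {ε ρ η : ℝ} (hε : 0 ≤ ε) (hη : 0 ≤ η)
    (hηρ : η * ρ ≤ 2) (hlow : ∀ w, -ε * ‖w‖ ^ 2 ≤ inner ℝ (T w) w)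
    (hup : ∀ w, inner ℝ (T w) w ≤ ρ * ‖w‖ ^ 2) :
    ‖ContinuousLinearMap.id ℝ E - η • T‖ ≤ 1 + η * ε := by
  have hsymm : ((ContinuousLinearMap.id ℝ E - η • T : E →L[ℝ] E) : E →ₗ[ℝ] E).IsSymmetric := by
    rw [ContinuousLinearMap.toLinearMap_sub, ContinuousLinearMap.toLinearMap_smul]
    exact LinearMap.IsSymmetric.id.sub (hT.smul (conj_trivial η))
  refine ContinuousLinearMap.opNorm_le_of_abs_inner_self_le hsymm (by positivity) fun w => ?_
  have hquad : inner ℝ ((ContinuousLinearMap.id ℝ E - η • T) w) w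
      = ‖w‖ ^ 2 - η * inner ℝ (T w) w := by
    simp [inner_sub_left, real_inner_smul_left]
  have hl := mul_le_mul_of_nonneg_left (hlow w) hη
  have hu := mul_le_mul_of_nonneg_left (hup w) hη
  rw [hquad, abs_le]
  constructor <;> nlinarith [sq_nonneg ‖w‖, mul_nonneg (mul_nonneg hη hε) (sq_nonneg ‖w‖)]

theorem isSymmetric_of_hasFDerivAt_gradient [CompleteSpace E] {f : E → ℝ}
    (hf : Differentiable ℝ f) {H : E → E →L[ℝ] E}
    (hH : ∀ x, HasFDerivAt (gradient f) (H x) x) (x : E) :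
    ((H x : E →L[ℝ] E) : E →ₗ[ℝ] E).IsSymmetric := fun v w => by
  have hdual : HasFDerivAt (fun y => toDual ℝ E (gradient f y))
      ((toDual ℝ E).toContinuousLinearEquiv.toContinuousLinearMap.comp (H x)) x :=
    (toDual ℝ E).toContinuousLinearEquiv.hasFDerivAt.comp x (hH x)
  show inner ℝ (H x v) w = inner ℝ v (H x w)
  rw [real_inner_comm (H x w) v]
  simpa using second_derivative_symmetric (fun y => (hf y).hasGradientAt) hdual v w

theorem sq_one_add_le_one_div_one_sub_two_mul {x : ℝ} (hx₀ : 0 ≤ x) (hx : 2 * x < 1) :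
    (1 + x) ^ 2 ≤ 1 / (1 - 2 * x) := by
  rw [le_div_iff₀ (by linarith)]
  nlinarith [mul_nonneg (sq_nonneg x) hx₀]

theorem stmt3_general {n : ℕ} (f : EuclideanSpace ℝ (Fin n) → ℝ) (hf : ContDiff ℝ 2 f)
    (ε ρ : ℝ) (hε : 0 ≤ ε)
    (H : EuclideanSpace ℝ (Fin n) → EuclideanSpace ℝ (Fin n) →L[ℝ] EuclideanSpace ℝ (Fin n))
    (hH : ∀ x, HasFDerivAt (gradient f) (H x) x)
    (hHbound : ∀ x w, -ε * ‖w‖ ^ 2 ≤ (inner ℝ (H x w) w : ℝ) ∧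
      (inner ℝ (H x w) w : ℝ) ≤ ρ * ‖w‖ ^ 2)
    (u v : EuclideanSpace ℝ (Fin n)) (η : ℝ) (hη : 0 < η)
    (hη₁ : 2 * η * ε < 1) (hη₂ : 2 * η * ρ < 3) :
    ‖u - v - η • (gradient f u - gradient f v)‖ ^ 2
      ≤ (1 / (1 - 2 * η * ε)) * ‖u - v‖ ^ 2 := by
  have hstep : ∀ x, HasFDerivAt (fun y => y - η • gradient f y)
      (ContinuousLinearMap.id ℝ _ - η • H x) x :=
    fun x => (hasFDerivAt_id x).sub ((hH x).const_smul η)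
  have hderiv_le : ∀ x, ‖ContinuousLinearMap.id ℝ _ - η • H x‖ ≤ 1 + η * ε := fun x =>
    norm_id_sub_smul_le_of_inner_self_mem_Icc
      (isSymmetric_of_hasFDerivAt_gradient (hf.differentiable two_ne_zero) hH x)
      hε hη.le (by linarith) (fun w => (hHbound x w).1) (fun w => (hHbound x w).2)
  have hlip : ‖u - v - η • (gradient f u - gradient f v)‖ ≤ (1 + η * ε) * ‖u - v‖ := by
    have := convex_univ.norm_image_sub_le_of_norm_hasFDerivWithin_le
      (fun x _ => (hstep x).hasFDerivWithinAt) (fun x _ => hderiv_le x)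
      (Set.mem_univ v) (Set.mem_univ u)
    rwa [smul_sub, sub_sub_sub_comm]
  calc ‖u - v - η • (gradient f u - gradient f v)‖ ^ 2
      ≤ ((1 + η * ε) * ‖u - v‖) ^ 2 := by gcongr
    _ = (1 + η * ε) ^ 2 * ‖u - v‖ ^ 2 := mul_pow _ _ _
    _ ≤ (1 / (1 - 2 * η * ε)) * ‖u - v‖ ^ 2 := by
      gcongr
      simpa [mul_assoc] using
        sq_one_add_le_one_div_one_sub_two_mul (by positivity) (by linarith : 2 * (η * ε) < 1)

/-- Lemma 2 of the paper: bound on `‖ζ‖²` where `ζ = u - v - η(∇f(u) - ∇f(v))`, for a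
function with Hessian eigenvalues in `[-ε, ρ]` and step size `η < min(1/(2ε), 3/(2ρ))`
(the conditions `2ηε < 1` and `2ηρ < 3` encode this, including the case `ε = 0`). -/
theorem stmt3 {n : ℕ} (f : EuclideanSpace ℝ (Fin n) → ℝ) (hf : ContDiff ℝ 2 f)
    (ε ρ : ℝ) (hε : 0 ≤ ε) (hρ : 0 ≤ ρ)
    (H : EuclideanSpace ℝ (Fin n) → EuclideanSpace ℝ (Fin n) →L[ℝ] EuclideanSpace ℝ (Fin n))
    (hH : ∀ x, HasFDerivAt (gradient f) (H x) x)
    (hHbound : ∀ x w, -ε * ‖w‖ ^ 2 ≤ (inner ℝ (H x w) w : ℝ) ∧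
      (inner ℝ (H x w) w : ℝ) ≤ ρ * ‖w‖ ^ 2)
    (u v : EuclideanSpace ℝ (Fin n)) (η : ℝ) (hη : 0 < η)
    (hη₁ : 2 * η * ε < 1) (hη₂ : 2 * η * ρ < 3) :
    ‖u - v - η • (gradient f u - gradient f v)‖ ^ 2
      ≤ (1 / (1 - 2 * η * ε)) * ‖u - v‖ ^ 2 :=
  stmt3_general f hf ε ρ hε H hH hHbound u v η hη hη₁ hη₂
end

section
/- Let f : ℝ^n × ℝ^m → ℝ be differentiable with ρ-Lipschitz gradient, h : ℝ^m → ℝ convex, and L(z, c) = f(z, c) + h(c). Let (z*, c*) minimize L. Suppose the iterates z^{k+1} = z^k - (1/ρ)∇_z f(z^k, c^k) and c^{k+1} = prox_{(1/ρ)h}(c^k - (1/ρ)∇_c f(z^k, c^k)) satisfy the proximal-PL condition 2ρD(c^k, ρ) + ‖∇_z f(z^k, c^k)‖² ≥ μ(L(z^k, c^k) - L(z*, c*)) for some μ > 0, where D(c, ρ) = -min_y [⟨∇_c f(z^k, c), y - c⟩ + (ρ/2)‖y - c‖² + h(y) - h(c)]. Then L(z^{k+1}, c^{k+1}) - L(z*,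 c*) ≤ (1 - μ/(2ρ))(L(z^k, c^k) - L(z*, c*)). -/
/-!
Joint `ρ`-smoothness of `f` is the descent lemma on the `L²` product space, whose gradient is
`(∇_z f, ∇_c f)`. Along the step `(z^{k+1} - z^k, c^{k+1} - c^k)` the `z`-part decreases `L` by
`‖∇_z f‖² / (2ρ)`. Scaled by `ρ`, the proximal objective differs from the forward-backward model
`⟨∇_c f, y - c⟩ + (ρ/2)‖y - c‖² + h y` by a constant, so the proximal point minimises the model
and the `c`-part decreases `L` by `D(c^k, ρ)`. The proximal-PL inequality bounds the total
decrease below by `μ / (2ρ)` times the optimality gap.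
-/

open RealInnerProductSpace Function

section DescentLemma

variable {E F : Type*} [NormedAddCommGroup E] [InnerProductSpace ℝ E] [CompleteSpace E]
  [NormedAddCommGroup F] [InnerProductSpace ℝ F] [CompleteSpace F]

theorem le_add_inner_add_sq_of_lipschitz_gradient {g : E → ℝ} {G : E → E} {ρ : ℝ}
    (hg : ∀ x, HasGradientAt g (G x) x) (hG : ∀ x y, ‖G x - G y‖ ≤ ρ * ‖x - y‖) (x u : E) :
    g (x + u) ≤ g x + ⟪G x, u⟫ + ρ / 2 * ‖u‖ ^ 2 := by
  set χ : ℝ → ℝ := fun t => g (x + t • u) - t * ⟪G x, u⟫ - ρ / 2 * ‖u‖ ^ 2 * t ^ 2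
  have hχ : ∀ t, HasDerivAt χ (⟪G (x + t • u) - G x, u⟫ - ρ * ‖u‖ ^ 2 * t) t := by
    intro t
    have hpath : HasDerivAt (fun s : ℝ => x + s • u) u t := by
      simpa using ((hasDerivAt_id t).smul_const u).const_add x
    have := (((hg _).hasFDerivAt.comp_hasDerivAt t hpath).sub
      ((hasDerivAt_id t).mul_const ⟪G x, u⟫)).sub
      ((hasDerivAt_pow 2 t).const_mul (ρ / 2 * ‖u‖ ^ 2))
    refine this.congr_deriv ?_
    simp only [InnerProductSpace.toDual_apply_apply, inner_sub_left]
    ring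
  have hanti : AntitoneOn χ (Set.Icc 0 1) := by
    refine antitoneOn_of_deriv_nonpos (convex_Icc 0 1)
      (fun t _ => (hχ t).continuousAt.continuousWithinAt)
      (fun t _ => (hχ t).differentiableAt.differentiableWithinAt) fun t ht => ?_
    rw [interior_Icc] at ht
    rw [(hχ t).deriv, sub_nonpos]
    calc ⟪G (x + t • u) - G x, u⟫ ≤ ‖G (x + t • u) - G x‖ * ‖u‖ := real_inner_le_norm _ _
      _ ≤ ρ * ‖t • u‖ * ‖u‖ := by
        gcongr
        simpa using hG (x + t • u) x
      _ = ρ * ‖u‖ ^ 2 * t := by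
        rw [norm_smul, Real.norm_of_nonneg ht.1.le]
        ring
  have h0 : χ 0 = g x := by simp [χ]
  have h1 : χ 1 = g (x + u) - ⟪G x, u⟫ - ρ / 2 * ‖u‖ ^ 2 := by simp [χ]
  linarith [hanti (Set.left_mem_Icc.2 zero_le_one) (Set.right_mem_Icc.2 zero_le_one) zero_le_one]

theorem hasGradientAt_withLp_prod {f : E → F → ℝ} {gz : E → F → E} {gc : E → F → F}
    (hgz : ∀ z c, HasGradientAt (f · c) (gz z c) z)
    (hgc : ∀ z c, HasGradientAt (f z ·) (gc z c) c)
    (hcz : Continuous (uncurry gz)) (hcc : Continuous (uncurry gc)) (p : WithLp 2 (E × F)) :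
    HasGradientAt (fun q : WithLp 2 (E × F) => f q.fst q.snd)
      (WithLp.toLp 2 (gz p.fst p.snd, gc p.fst p.snd)) p := by
  have hf := (hasStrictFDerivAt_uncurry_coprod (u := (p.fst, p.snd))
    (f₁ := fun z c => InnerProductSpace.toDual ℝ E (gz z c))
    (f₂ := fun z c => InnerProductSpace.toDual ℝ F (gc z c))
    (.of_forall fun v => (hgz v.1 v.2).hasFDerivAt)
    (.of_forall fun v => (hgc v.1 v.2).hasFDerivAt)
    ((InnerProductSpace.toDual ℝ E).continuous.comp hcz).continuousAt
    ((InnerProductSpace.toDual ℝ F).continuous.comp hcc).continuousAt).hasFDerivAt.comp p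
    (WithLp.prodContinuousLinearEquiv 2 ℝ E F).hasFDerivAt
  rw [hasGradientAt_iff_hasFDerivAt]
  refine hf.congr_fderiv ?_
  ext q
  simp only [ContinuousLinearMap.comp_apply, ContinuousLinearEquiv.coe_coe,
    WithLp.prodContinuousLinearEquiv_apply, ContinuousLinearMap.coprod_apply,
    InnerProductSpace.toDual_apply_apply, WithLp.prod_inner_apply]
  rfl

theorem le_add_inner_add_inner_add_sq_of_lipschitz_partialGradients {f : E → F → ℝ}
    {gz : E → F → E} {gc : E → F → F} {ρ : ℝ}
    (hgz : ∀ z c, HasGradientAt (f · c) (gz z c) z)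
    (hgc : ∀ z c, HasGradientAt (f z ·) (gc z c) c) (hρ : 0 ≤ ρ)
    (hLip : ∀ z c z' c', ‖gz z c - gz z' c'‖ ^ 2 + ‖gc z c - gc z' c'‖ ^ 2
      ≤ ρ ^ 2 * (‖z - z'‖ ^ 2 + ‖c - c'‖ ^ 2)) (z u : E) (c v : F) :
    f (z + u) (c + v) ≤ f z c + ⟪gz z c, u⟫ + ⟪gc z c, v⟫ + ρ / 2 * (‖u‖ ^ 2 + ‖v‖ ^ 2) := by
  set G : WithLp 2 (E × F) → WithLp 2 (E × F) := fun q =>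
    WithLp.toLp 2 (gz q.fst q.snd, gc q.fst q.snd)
  have hG : ∀ p q, ‖G p - G q‖ ≤ ρ * ‖p - q‖ := fun p q => by
    refine (pow_le_pow_iff_left₀ (norm_nonneg _) (by positivity) two_ne_zero).1 ?_
    simpa [mul_pow, WithLp.prod_norm_sq_eq_of_L2, G] using hLip p.fst p.snd q.fst q.snd
  have hGc : Continuous (G ∘ WithLp.toLp 2) :=
    (LipschitzWith.of_dist_le_mul (K := ⟨ρ, hρ⟩) fun p q => by
      rw [dist_eq_norm, dist_eq_norm]
      exact hG p q).continuous.comp (WithLp.prodContinuousLinearEquiv 2 ℝ E F).symm.continuous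
  have hcz : Continuous (uncurry gz) := (WithLp.continuous_fst 2 E F).comp hGc
  have hcc : Continuous (uncurry gc) := (WithLp.continuous_snd 2 E F).comp hGc
  have := le_add_inner_add_sq_of_lipschitz_gradient (hasGradientAt_withLp_prod hgz hgc hcz hcc)
    hG (WithLp.toLp 2 (z, c)) (WithLp.toLp 2 (u, v))
  simpa [G, WithLp.prod_inner_apply, WithLp.prod_norm_sq_eq_of_L2, add_assoc] using this

end DescentLemma

section ProximalStep

variable {F : Type*} [NormedAddCommGroup F] [InnerProductSpace ℝ F]

theorem isMinOn_inner_add_sq_add_of_isMinOn_prox {φ : F → ℝ} {x g p : F} {ρ : ℝ} (hρ : 0 < ρ)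
    (hp : IsMinOn (fun y => 1 / 2 * ‖y - (x - ρ⁻¹ • g)‖ ^ 2 + ρ⁻¹ * φ y) Set.univ p) :
    IsMinOn (fun y => ⟪g, y - x⟫ + ρ / 2 * ‖y - x‖ ^ 2 + φ y) Set.univ p := by
  have hmodel : ∀ y, ρ * (1 / 2 * ‖y - (x - ρ⁻¹ • g)‖ ^ 2 + ρ⁻¹ * φ y)
      = ⟪g, y - x⟫ + ρ / 2 * ‖y - x‖ ^ 2 + φ y + ‖g‖ ^ 2 / (2 * ρ) := fun y => by
    rw [sub_sub_eq_add_sub, add_sub_right_comm, norm_add_sq_real, norm_smul, inner_smul_right,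
      real_inner_comm, Real.norm_of_nonneg (inv_nonneg.2 hρ.le)]
    field_simp
    ring
  refine isMinOn_univ_iff.2 fun y => ?_
  have := mul_le_mul_of_nonneg_left (isMinOn_univ_iff.1 hp y) hρ.le
  rw [hmodel, hmodel] at this
  linarith

end ProximalStep

theorem stmt6_general {n m : ℕ}
    (f : EuclideanSpace ℝ (Fin n) → EuclideanSpace ℝ (Fin m) → ℝ)
    (h : EuclideanSpace ℝ (Fin m) → ℝ)
    (gz : EuclideanSpace ℝ (Fin n) → EuclideanSpace ℝ (Fin m) → EuclideanSpace ℝ (Fin n))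
    (gc : EuclideanSpace ℝ (Fin n) → EuclideanSpace ℝ (Fin m) → EuclideanSpace ℝ (Fin m))
    (hgz : ∀ z c, HasGradientAt (fun z' => f z' c) (gz z c) z)
    (hgc : ∀ z c, HasGradientAt (fun c' => f z c') (gc z c) c)
    (ρ : ℝ) (hρ : 0 < ρ)
    (hLip : ∀ z c z' c', ‖gz z c - gz z' c'‖ ^ 2 + ‖gc z c - gc z' c'‖ ^ 2
      ≤ ρ ^ 2 * (‖z - z'‖ ^ 2 + ‖c - c'‖ ^ 2))
    (zs : EuclideanSpace ℝ (Fin n)) (cs : EuclideanSpace ℝ (Fin m))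
    (z : ℕ → EuclideanSpace ℝ (Fin n)) (c : ℕ → EuclideanSpace ℝ (Fin m))
    (hupdz : ∀ k, z (k + 1) = z k - ρ⁻¹ • gz (z k) (c k))
    (hupdc : ∀ k y, (1 / 2) * ‖c (k + 1) - (c k - ρ⁻¹ • gc (z k) (c k))‖ ^ 2
        + ρ⁻¹ * h (c (k + 1))
      ≤ (1 / 2) * ‖y - (c k - ρ⁻¹ • gc (z k) (c k))‖ ^ 2 + ρ⁻¹ * h y)
    (D : ℕ → ℝ)
    (hD : ∀ k, IsLeast
      (Set.range fun y => (inner ℝ (gc (z k) (c k)) (y - c k) : ℝ)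
        + ρ / 2 * ‖y - c k‖ ^ 2 + h y - h (c k)) (-(D k)))
    (μ : ℝ)
    (hPL : ∀ k, μ * ((f (z k) (c k) + h (c k)) - (f zs cs + h cs))
      ≤ 2 * ρ * D k + ‖gz (z k) (c k)‖ ^ 2) :
    ∀ k, (f (z (k + 1)) (c (k + 1)) + h (c (k + 1))) - (f zs cs + h cs)
      ≤ (1 - μ / (2 * ρ)) * ((f (z k) (c k) + h (c k)) - (f zs cs + h cs)) := by
  intro k
  set g := gz (z k) (c k)
  have hdesc := le_add_inner_add_inner_add_sq_of_lipschitz_partialGradients hgz hgc hρ.le hLip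
    (z k) (-(ρ⁻¹ • g)) (c k) (c (k + 1) - c k)
  rw [← sub_eq_add_neg, ← hupdz, add_sub_cancel] at hdesc
  have hgradStep : ⟪g, -(ρ⁻¹ • g)⟫ + ρ / 2 * ‖-(ρ⁻¹ • g)‖ ^ 2 = -(‖g‖ ^ 2 / (2 * ρ)) := by
    rw [norm_neg, norm_smul, inner_neg_right, inner_smul_right, real_inner_self_eq_norm_sq,
      Real.norm_of_nonneg (inv_nonneg.2 hρ.le)]
    field_simp
    ring
  have hproxStep : ⟪gc (z k) (c k), c (k + 1) - c k⟫ + ρ / 2 * ‖c (k + 1) - c k‖ ^ 2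
      + h (c (k + 1)) - h (c k) ≤ -D k := by
    obtain ⟨y, hy⟩ := (hD k).1
    have := isMinOn_univ_iff.1 (isMinOn_inner_add_sq_add_of_isMinOn_prox hρ
      (isMinOn_univ_iff.2 (hupdc k))) y
    simp only at hy this
    linarith
  have hdecrease : f (z (k + 1)) (c (k + 1)) + h (c (k + 1))
      ≤ f (z k) (c k) + h (c k) - (2 * ρ * D k + ‖g‖ ^ 2) / (2 * ρ) := by
    rw [add_div, mul_div_cancel_left₀ _ (by positivity)]
    linarith
  have hPL' := div_le_div_of_nonneg_right (hPL k) (by positivity : (0 : ℝ) ≤ 2 * ρ)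
  rw [mul_div_right_comm] at hPL'
  linear_combination hdecrease + hPL'

/-- Theorem 2 of the paper (regularized RED): linear convergence in function values of the
alternating gradient / proximal-gradient method under a proximal-PL condition.
The proximal step is encoded by its defining minimization property, and `D k` is the
forward-backward quantity `D(c^k, ρ)` (its defining minimum is encoded via `IsLeast`). -/
theorem stmt6 {n m : ℕ}
    (f : EuclideanSpace ℝ (Fin n) → EuclideanSpace ℝ (Fin m) → ℝ)
    (h : EuclideanSpace ℝ (Fin m) → ℝ) (hconv : ConvexOn ℝ Set.univ h)
    (gz : EuclideanSpace ℝ (Fin n) → EuclideanSpace ℝ (Fin m) → EuclideanSpace ℝ (Fin n))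
    (gc : EuclideanSpace ℝ (Fin n) → EuclideanSpace ℝ (Fin m) → EuclideanSpace ℝ (Fin m))
    (hgz : ∀ z c, HasGradientAt (fun z' => f z' c) (gz z c) z)
    (hgc : ∀ z c, HasGradientAt (fun c' => f z c') (gc z c) c)
    (ρ : ℝ) (hρ : 0 < ρ)
    (hLip : ∀ z c z' c', ‖gz z c - gz z' c'‖ ^ 2 + ‖gc z c - gc z' c'‖ ^ 2
      ≤ ρ ^ 2 * (‖z - z'‖ ^ 2 + ‖c - c'‖ ^ 2))
    (zs : EuclideanSpace ℝ (Fin n)) (cs : EuclideanSpace ℝ (Fin m))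
    (hmin : ∀ z c, f zs cs + h cs ≤ f z c + h c)
    (z : ℕ → EuclideanSpace ℝ (Fin n)) (c : ℕ → EuclideanSpace ℝ (Fin m))
    (hupdz : ∀ k, z (k + 1) = z k - ρ⁻¹ • gz (z k) (c k))
    (hupdc : ∀ k y, (1 / 2) * ‖c (k + 1) - (c k - ρ⁻¹ • gc (z k) (c k))‖ ^ 2
        + ρ⁻¹ * h (c (k + 1))
      ≤ (1 / 2) * ‖y - (c k - ρ⁻¹ • gc (z k) (c k))‖ ^ 2 + ρ⁻¹ * h y)
    (D : ℕ → ℝ)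
    (hD : ∀ k, IsLeast
      (Set.range fun y => (inner ℝ (gc (z k) (c k)) (y - c k) : ℝ)
        + ρ / 2 * ‖y - c k‖ ^ 2 + h y - h (c k)) (-(D k)))
    (μ : ℝ) (hμ : 0 < μ)
    (hPL : ∀ k, μ * ((f (z k) (c k) + h (c k)) - (f zs cs + h cs))
      ≤ 2 * ρ * D k + ‖gz (z k) (c k)‖ ^ 2) :
    ∀ k, (f (z (k + 1)) (c (k + 1)) + h (c (k + 1))) - (f zs cs + h cs)
      ≤ (1 - μ / (2 * ρ)) * ((f (z k) (c k) + h (c k)) - (f zs cs + h cs)) :=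
  stmt6_general f h gz gc hgz hgc ρ hρ hLip zs cs z c hupdz hupdc D hD μ hPL
end
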